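/- For any nonnegative integers w and b, not both zero, and any p ∈ (0,1), the minimum of the quadratic form μᵀ M μ over probability vectors μ on w+b vertices — where M has diagonal entries p on the first w coordinates (white vertices), diagonal entries 1−p on the last b coordinates (black vertices), and all off-diagonal entries 0 — equals (w/p + b/(1−p))⁻¹. -/

import Mathlib

/- With all edges gray the form is diagonal, `⟨μ, Mμ⟩ = ∑ c x μ(x)²`, and Cauchy–Schwarz
(`1 = (∑ μ)² ≤ (∑ 1/c) (∑ c μ²)`) bounds it below by `(∑ 1/c)⁻¹`, with equality for
`μ ∝ 1/c`. For `K(w,b)` the weights are `p` on `w` vertices and `1 - p` on `b` vertices. -/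

open Finset

inductive EColor | white | black | gray
deriving DecidableEq

/-- The `p`-weight of an edge color: `p` for white, `1-p` for black, `0` for gray. -/
def wval (p : ℝ) : EColor → ℝ
  | .white => p
  | .black => 1 - p
  | .gray => 0

/-- The matrix `M_K(p)` of a CRG given by vertex colors `vb` (`true` = black)
and edge colors `ec`. -/
def Mmat {V : Type*} [DecidableEq V] (vb : V → Bool) (ec : V → V → EColor) (p : ℝ)
    (x y : V) : ℝ :=
  if x = y then (if vb x then 1 - p else p) else wval p (ec x y)

/-- `μ` is a probability mass. -/
def IsProb {V : Type*} [Fintype V] (μ : V → ℝ) : Prop :=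
  (∀ x, 0 ≤ μ x) ∧ ∑ x, μ x = 1

/-- The quadratic form `⟨μ, M_K(p) μ⟩`. -/
def QF {V : Type*} [Fintype V] [DecidableEq V] (vb : V → Bool) (ec : V → V → EColor)
    (p : ℝ) (μ : V → ℝ) : ℝ :=
  ∑ x, ∑ y, μ x * Mmat vb ec p x y * μ y

/-- `g` is the minimum of the quadratic form over probability masses, i.e. `g = g_K(p)`. -/
def gIs {V : Type*} [Fintype V] [DecidableEq V] (vb : V → Bool) (ec : V → V → EColor)
    (p g : ℝ) : Prop :=
  IsLeast {t | ∃ μ : V → ℝ, IsProb μ ∧ t = QF vb ec p μ} g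

/-- The weighted gray-degree `d_G(u) = ∑_{v : uv gray} μ(v)`. -/
def grayDeg {V : Type*} [Fintype V] [DecidableEq V] (ec : V → V → EColor) (μ : V → ℝ)
    (u : V) : ℝ :=
  ∑ v ∈ Finset.univ.filter (fun v => v ≠ u ∧ ec u v = EColor.gray), μ v

theorem isLeast_sum_mul_sq_of_isProb {V : Type*} [Fintype V] [Nonempty V] {c : V → ℝ}
    (hc : ∀ x, 0 < c x) :
    IsLeast {t | ∃ μ : V → ℝ, IsProb μ ∧ t = ∑ x, c x * μ x ^ 2} (∑ x, (c x)⁻¹)⁻¹ := by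
  set S := ∑ x, (c x)⁻¹
  have hS : 0 < S := Finset.sum_pos (fun x _ => inv_pos.mpr (hc x)) Finset.univ_nonempty
  constructor
  · refine ⟨fun x => (c x)⁻¹ / S, ⟨fun x => div_nonneg (inv_pos.mpr (hc x)).le hS.le, ?_⟩, ?_⟩
    · rw [← Finset.sum_div, div_self hS.ne']
    · have hterm : ∀ x, c x * ((c x)⁻¹ / S) ^ 2 = (c x)⁻¹ / S ^ 2 := fun x => by
        field_simp [(hc x).ne']
      simp_rw [hterm, ← Finset.sum_div]
      rw [sq, div_mul_cancel_left₀ hS.ne']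
  · rintro t ⟨μ, ⟨-, hμ⟩, rfl⟩
    have titu := Finset.sq_sum_div_le_sum_sq_div Finset.univ μ (fun x _ => inv_pos.mpr (hc x))
    simpa only [hμ, one_pow, one_div, div_inv_eq_mul, mul_comm (μ _ ^ 2)] using titu

theorem QF_allGray {V : Type*} [Fintype V] [DecidableEq V] (vb : V → Bool) (p : ℝ)
    (μ : V → ℝ) :
    QF vb (fun _ _ => EColor.gray) p μ = ∑ x, (if vb x then 1 - p else p) * μ x ^ 2 := by
  refine Finset.sum_congr rfl fun x _ => ?_
  rw [Finset.sum_eq_single x (fun y _ hyx => by simp [Mmat, hyx.symm, wval]) (by simp)]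
  simp only [Mmat, if_true]
  ring

theorem gIs_allGray {V : Type*} [Fintype V] [DecidableEq V] [Nonempty V] (vb : V → Bool)
    {p : ℝ} (hp0 : 0 < p) (hp1 : p < 1) :
    gIs vb (fun _ _ => EColor.gray) p (∑ x, (if vb x then 1 - p else p)⁻¹)⁻¹ := by
  simp_rw [gIs, QF_allGray]
  exact isLeast_sum_mul_sq_of_isProb fun x => by split_ifs <;> linarith

theorem sum_inv_weight_fin_add (w b : ℕ) (p : ℝ) :
    ∑ i : Fin (w + b), (if w ≤ i.val then 1 - p else p)⁻¹ = (w : ℝ) / p + (b : ℝ) / (1 - p) := by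
  simp [Fin.sum_univ_add, div_eq_mul_inv, fun i : Fin w => not_le.mpr i.isLt]

/-- for the all-gray CRG `K(w,b)` (w white, b black vertices, all edges gray),
`g_{K(w,b)}(p) = (w/p + b/(1-p))⁻¹` for `p ∈ (0,1)`, whenever `w + b ≥ 1`. -/
theorem stmt0 (w b : ℕ) (hwb : 1 ≤ w + b) (p : ℝ) (hp0 : 0 < p) (hp1 : p < 1) :
    gIs (fun i : Fin (w + b) => decide (w ≤ i.val)) (fun _ _ => EColor.gray) p
      (((w : ℝ) / p + (b : ℝ) / (1 - p))⁻¹) := by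
  have : Nonempty (Fin (w + b)) := ⟨⟨0, hwb⟩⟩
  simpa only [decide_eq_true_eq, sum_inv_weight_fin_add] using
    gIs_allGray (fun i : Fin (w + b) => decide (w ≤ i.val)) hp0 hp1
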